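/- arXiv:1701.07286 — 2 statements merged into one kernel-verified Lean document; each statement's English description precedes it below -/
import Mathlib

section
/- Suppose $1 \leq m \leq n$ are integers, $0 < r < \infty$, $w \in \mathbb{R}^n$ with $|w| \leq r$, $T$ is an $m$-dimensional subspace of $\mathbb{R}^n$, and $f : T \to T^\perp$ is a locally Lipschitz function with $f(0) = 0$. Then $\delta_{\mathrm{gr} f}(w) \leq |T^\perp_\natural(w) - f(T_\natural(w))| \leq (2 + \mathrm{Lip}(f|_{\mathbf{B}(0,2r)})) \, \delta_{\mathrm{gr} f}(w)$. -/
open MeasureTheory Metric Filter Set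
open scoped ENNReal Topology NNReal

/-- Orthogonal projection onto a subspace, as a map into the ambient space. -/
noncomputable def projS {n : ℕ} (T : Submodule ℝ (EuclideanSpace ℝ (Fin n)))
    (x : EuclideanSpace ℝ (Fin n)) : EuclideanSpace ℝ (Fin n) :=
  (Submodule.orthogonalProjectionOnto T x : EuclideanSpace ℝ (Fin n))

/-!
Write `w = P + Q` with `P ∈ T` and `Q ∈ Tᗮ`. For every `χ ∈ T` the vector
`w - (χ + f χ) = (P - χ) + (Q - f χ)` is an orthogonal sum, so both `‖P - χ‖` and `‖Q - f χ‖`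
are at most `‖w - (χ + f χ)‖`. Testing the graph at `P` gives the lower bound. For the upper
bound take any `χ`: if `‖χ‖ ≤ 2r`, then
`‖Q - f P‖ ≤ ‖Q - f χ‖ + K ‖χ - P‖ ≤ (1 + K) ‖w - (χ + f χ)‖`; otherwise
`‖w - (χ + f χ)‖ ≥ ‖χ‖ - ‖P‖ ≥ r`, while `‖Q - f P‖ ≤ ‖Q‖ + K ‖P‖ ≤ (1 + K) r` because `f 0 = 0`.
-/

lemma norm_le_norm_add_of_inner_eq_zero {E : Type*} [NormedAddCommGroup E]
    [InnerProductSpace ℝ E] {u v : E} (h : inner ℝ u v = 0) : ‖u‖ ≤ ‖u + v‖ := by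
  rw [mul_self_le_mul_self_iff (norm_nonneg _) (norm_nonneg _),
    norm_add_sq_eq_norm_sq_add_norm_sq_real h]
  exact le_add_of_nonneg_right (mul_self_nonneg _)

lemma Metric.le_mul_infDist {α : Type*} [PseudoMetricSpace α] {s : Set α} {x : α} {a c : ℝ}
    (hs : s.Nonempty) (hc : 0 < c) (h : ∀ y ∈ s, a ≤ c * dist x y) : a ≤ c * infDist x s := by
  rw [← div_le_iff₀' hc, le_infDist hs]
  exact fun y hy ↦ (div_le_iff₀' hc).2 (h y hy)

namespace Submodule

variable {E : Type*} [NormedAddCommGroup E] [InnerProductSpace ℝ E]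
  {T : Submodule ℝ E} [T.HasOrthogonalProjection]

def orthogonalGraph (f : T → Tᗮ) : Set E := range fun χ : T ↦ (χ : E) + f χ

lemma sub_add_eq_orthogonalProjectionOnto_sub_add (w : E) (χ : T) (y : Tᗮ) :
    w - ((χ : E) + y) =
      ((T.orthogonalProjectionOnto w - χ : T) : E) +
        ((Tᗮ.orthogonalProjectionOnto w - y : Tᗮ) : E) := by
  conv_lhs => rw [← T.starProjection_add_starProjection_orthogonal w]
  simp only [starProjection_apply, Submodule.coe_sub]
  abel

lemma norm_orthogonalProjectionOnto_sub_le (w : E) (χ : T) (y : Tᗮ) :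
    ‖T.orthogonalProjectionOnto w - χ‖ ≤ ‖w - ((χ : E) + y)‖ := by
  rw [sub_add_eq_orthogonalProjectionOnto_sub_add]
  exact norm_le_norm_add_of_inner_eq_zero <|
    inner_right_of_mem_orthogonal (T.orthogonalProjectionOnto w - χ).2
      (Tᗮ.orthogonalProjectionOnto w - y).2

lemma norm_orthogonalProjectionOnto_orthogonal_sub_le (w : E) (χ : T) (y : Tᗮ) :
    ‖Tᗮ.orthogonalProjectionOnto w - y‖ ≤ ‖w - ((χ : E) + y)‖ := by
  rw [sub_add_eq_orthogonalProjectionOnto_sub_add, add_comm]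
  exact norm_le_norm_add_of_inner_eq_zero <|
    inner_left_of_mem_orthogonal (T.orthogonalProjectionOnto w - χ).2
      (Tᗮ.orthogonalProjectionOnto w - y).2

variable {f : T → Tᗮ}

lemma infDist_orthogonalGraph_le (w : E) :
    infDist w (orthogonalGraph f) ≤
      ‖(Tᗮ.orthogonalProjectionOnto w : E) - f (T.orthogonalProjectionOnto w)‖ := by
  have hP : _ ∈ orthogonalGraph f := ⟨T.orthogonalProjectionOnto w, rfl⟩
  refine (infDist_le_dist_of_mem hP).trans_eq ?_
  rw [dist_eq_norm, sub_add_eq_orthogonalProjectionOnto_sub_add, sub_self]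
  simp

lemma norm_sub_apply_le_of_lipschitzOnWith {s : Set T} {K : ℝ≥0} (hK : LipschitzOnWith K f s)
    (w : E) {χ : T} (hχ : χ ∈ s) (hP : T.orthogonalProjectionOnto w ∈ s) :
    ‖(Tᗮ.orthogonalProjectionOnto w : E) - f (T.orthogonalProjectionOnto w)‖ ≤
      (1 + K) * ‖w - ((χ : E) + f χ)‖ := by
  set P := T.orthogonalProjectionOnto w
  set d := ‖w - ((χ : E) + f χ)‖
  have hfχP : ‖(f χ : E) - f P‖ ≤ K * d := calc
    ‖(f χ : E) - f P‖ = dist (f χ) (f P) := by rw [dist_eq_norm]; rfl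
    _ ≤ K * dist χ P := hK.dist_le_mul χ hχ P hP
    _ ≤ K * d := by
      rw [dist_comm, dist_eq_norm]
      gcongr
      exact norm_orthogonalProjectionOnto_sub_le w χ (f χ)
  calc ‖(Tᗮ.orthogonalProjectionOnto w : E) - f P‖
      ≤ ‖(Tᗮ.orthogonalProjectionOnto w : E) - f χ‖ + ‖(f χ : E) - f P‖ :=
        norm_sub_le_norm_sub_add_norm_sub _ _ _
    _ ≤ d + K * d := add_le_add (norm_orthogonalProjectionOnto_orthogonal_sub_le w χ (f χ)) hfχP
    _ = (1 + K) * d := by ring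

lemma norm_sub_apply_le_of_two_mul_lt_norm {r : ℝ} {K : ℝ≥0} {w : E} (hw : ‖w‖ ≤ r)
    (hf0 : f 0 = 0) (hK : LipschitzOnWith K f (closedBall 0 (2 * r))) {χ : T} (hχ : 2 * r < ‖χ‖) :
    ‖(Tᗮ.orthogonalProjectionOnto w : E) - f (T.orthogonalProjectionOnto w)‖ ≤
      (1 + K) * ‖w - ((χ : E) + f χ)‖ := by
  set P := T.orthogonalProjectionOnto w
  have hr : 0 ≤ r := (norm_nonneg w).trans hw
  have hP : ‖P‖ ≤ r := (T.norm_orthogonalProjectionOnto_apply_le w).trans hw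
  have hQ : ‖Tᗮ.orthogonalProjectionOnto w‖ ≤ r :=
    (Tᗮ.norm_orthogonalProjectionOnto_apply_le w).trans hw
  have hfP : ‖f P‖ ≤ K * r := by
    have h := hK.dist_le_mul P (mem_closedBall_zero_iff.2 (by linarith)) 0 (by simp [hr])
    rw [hf0, dist_zero_right, dist_zero_right] at h
    exact h.trans (by gcongr)
  have hd : r ≤ ‖w - ((χ : E) + f χ)‖ := by
    have := norm_sub_norm_le χ P
    rw [norm_sub_rev] at this
    linarith [norm_orthogonalProjectionOnto_sub_le w χ (f χ)]
  calc ‖(Tᗮ.orthogonalProjectionOnto w : E) - f P‖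
      ≤ ‖Tᗮ.orthogonalProjectionOnto w‖ + ‖f P‖ := norm_sub_le _ _
    _ ≤ (1 + K) * r := by linarith
    _ ≤ (1 + K) * ‖w - ((χ : E) + f χ)‖ := by gcongr

lemma norm_sub_apply_le_mul_infDist_orthogonalGraph {r : ℝ} {K : ℝ≥0} {w : E} (hw : ‖w‖ ≤ r)
    (hf0 : f 0 = 0) (hK : LipschitzOnWith K f (closedBall 0 (2 * r))) :
    ‖(Tᗮ.orthogonalProjectionOnto w : E) - f (T.orthogonalProjectionOnto w)‖ ≤
      (1 + K) * infDist w (orthogonalGraph f) := by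
  refine le_mul_infDist ⟨_, 0, rfl⟩ (by positivity) ?_
  rintro _ ⟨χ, rfl⟩
  rw [dist_eq_norm]
  by_cases hχ : χ ∈ closedBall 0 (2 * r)
  · refine norm_sub_apply_le_of_lipschitzOnWith hK w hχ ?_
    rw [mem_closedBall_zero_iff]
    linarith [T.norm_orthogonalProjectionOnto_apply_le w, norm_nonneg w]
  · exact norm_sub_apply_le_of_two_mul_lt_norm hw hf0 hK (by simpa using hχ)

end Submodule

theorem stmt8_general {n : ℕ} (r : ℝ)
    (w : EuclideanSpace ℝ (Fin n)) (hw : ‖w‖ ≤ r)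
    (T : Submodule ℝ (EuclideanSpace ℝ (Fin n)))
    (f : T → Tᗮ) (hf0 : f 0 = 0)
    (K : ℝ≥0) (hK : LipschitzOnWith K f (Metric.closedBall (0 : T) (2 * r))) :
    Metric.infDist w (Set.range fun χ : T =>
        (χ : EuclideanSpace ℝ (Fin n)) + (f χ : EuclideanSpace ℝ (Fin n))) ≤
      ‖projS Tᗮ w - (f (Submodule.orthogonalProjectionOnto T w) : EuclideanSpace ℝ (Fin n))‖ ∧
    ‖projS Tᗮ w - (f (Submodule.orthogonalProjectionOnto T w) : EuclideanSpace ℝ (Fin n))‖ ≤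
      (2 + (K : ℝ)) * Metric.infDist w (Set.range fun χ : T =>
        (χ : EuclideanSpace ℝ (Fin n)) + (f χ : EuclideanSpace ℝ (Fin n))) := by
  refine ⟨Submodule.infDist_orthogonalGraph_le w, ?_⟩
  calc _ ≤ (1 + K) * infDist w (Submodule.orthogonalGraph f) :=
        Submodule.norm_sub_apply_le_mul_infDist_orthogonalGraph hw hf0 hK
    _ ≤ (2 + K) * infDist w (Submodule.orthogonalGraph f) :=
        mul_le_mul_of_nonneg_right (by linarith) infDist_nonneg

theorem stmt8 {m n : ℕ} (hm : 1 ≤ m) (hmn : m ≤ n) (r : ℝ) (hr : 0 < r)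
    (w : EuclideanSpace ℝ (Fin n)) (hw : ‖w‖ ≤ r)
    (T : Submodule ℝ (EuclideanSpace ℝ (Fin n))) (hT : Module.finrank ℝ T = m)
    (f : T → Tᗮ) (hf : LocallyLipschitz f) (hf0 : f 0 = 0)
    (K : ℝ≥0) (hK : LipschitzOnWith K f (Metric.closedBall (0 : T) (2 * r))) :
    Metric.infDist w (Set.range fun χ : T =>
        (χ : EuclideanSpace ℝ (Fin n)) + (f χ : EuclideanSpace ℝ (Fin n))) ≤
      ‖projS Tᗮ w - (f (Submodule.orthogonalProjectionOnto T w) : EuclideanSpace ℝ (Fin n))‖ ∧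
    ‖projS Tᗮ w - (f (Submodule.orthogonalProjectionOnto T w) : EuclideanSpace ℝ (Fin n))‖ ≤
      (2 + (K : ℝ)) * Metric.infDist w (Set.range fun χ : T =>
        (χ : EuclideanSpace ℝ (Fin n)) + (f χ : EuclideanSpace ℝ (Fin n))) :=
  stmt8_general r w hw T f hf0 K hK
end

section
/- Let $1 \leq m \leq n$ and $k \geq 1$ be integers, $T$ an $m$-dimensional subspace of $\mathbb{R}^n$, and let $P, Q : T \to T^\perp$ be polynomial functions of degree at most $k$ with $P(0) = 0$ and $D^i Q(0) = 0$ for $i = 0, \ldots, k-1$ (so $Q$ is homogeneous of degree $k$). Suppose for every $\epsilon > 0$ there exists $\rho > 0$ such that for every $z \in \mathrm{gr}(P) \cap \mathbf{B}(0,r)$ and $0 < r \leq \rho$, the set $\mathbf{C}(T,z,\epsilon r, \epsilon r^k) \cap \{w : \delta_{\mathrm{gr}(Q)}(w) \leq \epsilon r^k\}$ is nonempty. Then $P = Q$. -/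
open MeasureTheory Metric Filter Set
open scoped ENNReal Topology

/-- `P` is a polynomial function of degree at most `k`. -/
def PolyDegLE {E F : Type*} [NormedAddCommGroup E] [NormedSpace ℝ E]
    [NormedAddCommGroup F] [NormedSpace ℝ F] (k : ℕ) (P : E → F) : Prop :=
  ∃ φ : ∀ i : ℕ, ContinuousMultilinearMap ℝ (fun _ : Fin i => E) F,
    ∀ x, P x = ∑ i ∈ Finset.range (k + 1), φ i (fun _ => x)

/-!
Fix `χ ∈ T` and follow the ray `t ↦ t • χ`. The point `z = tχ + P(tχ)` of `gr P` lies in a ball of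
radius `r ≍ t`, so the hypothesis yields a point of `gr Q` over some `x'` with `‖x' - tχ‖ ≲ ε t` and
`‖Q x' - P(tχ)‖ ≲ ε t^k`. Being homogeneous of degree `k`, `Q` is `O(t^(k-1))`-Lipschitz on the
ball of radius `O(t)`, hence `‖P(tχ) - Q(tχ)‖ ≲ ε t^k`: the curve `t ↦ P(tχ) - Q(tχ)` is `o(t^k)`
as `t → 0⁺`. It is a polynomial of degree at most `k` in `t`, so it vanishes identically, and
`t = 1` gives `P χ = Q χ`.
-/

open Asymptotics

section PolyCurve

variable {F : Type*} [NormedAddCommGroup F] [NormedSpace ℝ F]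

def IsPolyCurve (k : ℕ) (f : ℝ → F) : Prop :=
  ∃ c : ℕ → F, ∀ t, f t = ∑ i ∈ Finset.range (k + 1), t ^ i • c i

lemma IsPolyCurve.sub {k : ℕ} {f g : ℝ → F} (hf : IsPolyCurve k f) (hg : IsPolyCurve k g) :
    IsPolyCurve k (fun t => f t - g t) := by
  obtain ⟨c, hc⟩ := hf
  obtain ⟨d, hd⟩ := hg
  exact ⟨c - d, fun t => by simp [hc, hd, smul_sub]⟩

lemma isPolyCurve_pow_smul {j k : ℕ} (hjk : j ≤ k) (v : F) :
    IsPolyCurve k (fun t => t ^ j • v) :=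
  ⟨Pi.single j v, fun t => by simp [Pi.single_apply, smul_ite, Nat.lt_succ_of_le hjk]⟩

lemma IsPolyCurve.differentiable {k : ℕ} {f : ℝ → F} (hf : IsPolyCurve k f) :
    Differentiable ℝ f := by
  obtain ⟨c, hc⟩ := hf
  rw [funext hc]
  fun_prop

lemma IsPolyCurve.isBigO_sub {k : ℕ} {f : ℝ → F} (hf : IsPolyCurve k f) :
    (fun t => f t - f 0) =O[𝓝 0] fun t => t := by
  simpa using (hf.differentiable 0).hasDerivAt.isBigO_sub

lemma coeff_eq_zero_of_isLittleO_pow : ∀ {k : ℕ} {c : ℕ → F},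
    (fun t : ℝ => ∑ i ∈ Finset.range (k + 1), t ^ i • c i) =o[𝓝[>] 0] (fun t => t ^ k) →
      ∀ i ≤ k, c i = 0
  | 0, c, h => by
    simp only [zero_add, Finset.range_one, Finset.sum_singleton, pow_zero, one_smul] at h
    rintro i hi
    rw [Nat.le_zero.1 hi]
    exact isLittleO_const_const_iff.1 h
  | k + 1, c, h => by
    have hc0 : c 0 = 0 := by
      refine tendsto_nhds_unique ?_ (h.trans_tendsto ?_)
      · have hcont : Continuous fun t : ℝ => ∑ i ∈ Finset.range (k + 2), t ^ i • c i := by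
          fun_prop
        simpa [Finset.sum_range_succ'] using
          (hcont.tendsto 0).mono_left (nhdsWithin_le_nhds (s := Ioi 0))
      · exact tendsto_nhdsWithin_of_tendsto_nhds
          (by simpa using (continuous_pow (k + 1)).tendsto (0 : ℝ))
    have hshift : ∀ t : ℝ, ∑ i ∈ Finset.range (k + 2), t ^ i • c i
        = t • ∑ i ∈ Finset.range (k + 1), t ^ i • c (i + 1) := by
      intro t
      simp only [Finset.sum_range_succ' _ (k + 1), hc0, smul_zero, add_zero, Finset.smul_sum,
        pow_succ, mul_smul, smul_comm t]
    have hpos : ∀ᶠ t in 𝓝[>] (0 : ℝ), t ≠ 0 := eventually_mem_nhdsWithin.mono fun t ht => ht.ne'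
    have hlow : (fun t : ℝ => ∑ i ∈ Finset.range (k + 1), t ^ i • c (i + 1)) =o[𝓝[>] 0]
        (fun t => t ^ k) := by
      refine ((isBigO_refl (fun t : ℝ => t⁻¹) _).smul_isLittleO h).congr' ?_ ?_ <;>
        filter_upwards [hpos] with t ht
      · rw [hshift, inv_smul_smul₀ ht]
      · rw [smul_eq_mul, pow_succ', inv_mul_cancel_left₀ ht]
    rintro (_ | i) hi
    · exact hc0
    · exact coeff_eq_zero_of_isLittleO_pow hlow i (by omega)

theorem IsPolyCurve.eq_zero_of_isLittleO {k : ℕ} {f : ℝ → F} (hf : IsPolyCurve k f)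
    (h : f =o[𝓝[>] 0] (fun t => t ^ k)) : f = 0 := by
  obtain ⟨c, hc⟩ := hf
  have hcoeff := coeff_eq_zero_of_isLittleO_pow (funext hc ▸ h)
  funext t
  rw [hc, Pi.zero_apply]
  exact Finset.sum_eq_zero fun i hi =>
    by rw [hcoeff i (Nat.lt_succ_iff.1 (Finset.mem_range.1 hi)), smul_zero]

end PolyCurve

section Homogeneous

variable {E F : Type*} [NormedAddCommGroup E] [NormedSpace ℝ E]
  [NormedAddCommGroup F] [NormedSpace ℝ F] {k : ℕ}

lemma ContinuousMultilinearMap.apply_const_smul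
    (ψ : ContinuousMultilinearMap ℝ (fun _ : Fin k => E) F) (t : ℝ) (x : E) :
    ψ (fun _ => t • x) = t ^ k • ψ (fun _ => x) := by
  simpa using ψ.map_smul_univ (fun _ => t) (fun _ => x)

lemma ContinuousMultilinearMap.norm_apply_const_sub_le
    (ψ : ContinuousMultilinearMap ℝ (fun _ : Fin k => E) F) (x y : E) :
    ‖ψ (fun _ => x) - ψ (fun _ => y)‖ ≤ ‖ψ‖ * k * max ‖x‖ ‖y‖ ^ (k - 1) * ‖x - y‖ := by
  rcases Nat.eq_zero_or_pos k with rfl | hk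
  · simp [Subsingleton.elim (fun _ : Fin 0 => x) (fun _ => y)]
  · have : Nonempty (Fin k) := ⟨⟨0, hk⟩⟩
    have hsub : (fun _ : Fin k => x) - (fun _ => y) = fun _ => x - y := rfl
    simpa [pi_norm_const, hsub] using ψ.norm_image_sub_le (fun _ => x) (fun _ => y)

lemma PolyDegLE.isPolyCurve_apply_smul {k : ℕ} {P : E → F} (hP : PolyDegLE k P) (x : E) :
    IsPolyCurve k fun t => P (t • x) := by
  obtain ⟨φ, hφ⟩ := hP
  exact ⟨fun i => φ i fun _ => x, fun t => by simp [hφ, ContinuousMultilinearMap.apply_const_smul]⟩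

end Homogeneous

lemma Asymptotics.isLittleO_of_forall_eventually_le_mul {α E F : Type*} [Norm E]
    [SeminormedAddCommGroup F] {f : α → E} {g : α → F} {l : Filter α} (C : ℝ)
    (h : ∀ ε : ℝ, 0 < ε → ε ≤ 1 → ∀ᶠ x in l, ‖f x‖ ≤ ε * C * ‖g x‖) : f =o[l] g := by
  refine isLittleO_iff.2 fun c hc => ?_
  have hε : 0 < min 1 (c / (|C| + 1)) := lt_min one_pos (by positivity)
  filter_upwards [h _ hε (min_le_left _ _)] with x hx
  refine hx.trans (mul_le_mul_of_nonneg_right ?_ (norm_nonneg _))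
  calc min 1 (c / (|C| + 1)) * C ≤ c / (|C| + 1) * |C| :=
        (mul_le_mul_of_nonneg_left (le_abs_self C) hε.le).trans
          (mul_le_mul_of_nonneg_right (min_le_right _ _) (abs_nonneg C))
    _ ≤ c := by
        rw [div_mul_eq_mul_div, div_le_iff₀ (by positivity)]
        nlinarith

section Graph

variable {n : ℕ} {T : Submodule ℝ (EuclideanSpace ℝ (Fin n))} {k : ℕ} {Q : T → Tᗮ}
  {ψ : ContinuousMultilinearMap ℝ (fun _ : Fin k => T) Tᗮ}

local notation "𝔼" => EuclideanSpace ℝ (Fin n)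

def gr (f : T → Tᗮ) : Set 𝔼 := range fun χ : T => (χ : 𝔼) + (f χ : 𝔼)

lemma projS_coe_add (x : T) (v : Tᗮ) : projS T ((x : 𝔼) + v) = x := by
  simp [projS, Submodule.orthogonalProjectionOnto_apply_of_mem_orthogonal v.2]

lemma projS_orthogonal_coe_add (x : T) (v : Tᗮ) : projS Tᗮ ((x : 𝔼) + v) = v := by
  simp [projS, Submodule.orthogonalProjectionOnto_orthogonal_apply_eq_zero x.2]

lemma norm_projS_le (S : Submodule ℝ 𝔼) (y : 𝔼) : ‖projS S y‖ ≤ ‖y‖ :=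
  S.norm_orthogonalProjectionOnto_apply_le y

lemma norm_projS_sub_le (S : Submodule ℝ 𝔼) (y w z : 𝔼) :
    ‖projS S (y - z)‖ ≤ ‖y - w‖ + ‖projS S (w - z)‖ := by
  calc ‖projS S (y - z)‖ = ‖projS S (y - w) + projS S (w - z)‖ := by
        simp [projS]
    _ ≤ ‖y - w‖ + ‖projS S (w - z)‖ :=
        (norm_add_le _ _).trans (add_le_add_left (norm_projS_le S _) _)

lemma exists_near_of_infDist_gr_le {x : T} {v : Tᗮ} {w : 𝔼} {a b : ℝ}
    (hwT : ‖projS T (w - (x + v))‖ < a) (hwN : ‖projS Tᗮ (w - (x + v))‖ < b)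
    (hwQ : infDist w (gr Q) ≤ b) :
    ∃ x' : T, ‖x' - x‖ < a + 2 * b ∧ ‖Q x' - v‖ < 3 * b := by
  have hb : 0 < b := (norm_nonneg _).trans_lt hwN
  obtain ⟨_, ⟨x', rfl⟩, hy⟩ :=
    (infDist_lt_iff (range_nonempty _)).1 (hwQ.trans_lt (lt_two_mul_self hb))
  rw [dist_comm, dist_eq_norm] at hy
  have hsplit : (x' : 𝔼) + Q x' - (x + v) = ((x' - x : T) : 𝔼) + ((Q x' - v : Tᗮ) : 𝔼) := by
    push_cast; abel
  refine ⟨x', ?_, ?_⟩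
  · calc ‖x' - x‖ = ‖projS T ((x' : 𝔼) + Q x' - (x + v))‖ := by
          rw [hsplit, projS_coe_add, Submodule.norm_coe]
      _ ≤ ‖(x' : 𝔼) + Q x' - w‖ + ‖projS T (w - (x + v))‖ := norm_projS_sub_le _ _ _ _
      _ < a + 2 * b := by linarith
  · calc ‖Q x' - v‖ = ‖projS Tᗮ ((x' : 𝔼) + Q x' - (x + v))‖ := by
          rw [hsplit, projS_orthogonal_coe_add, Submodule.norm_coe]
      _ ≤ ‖(x' : 𝔼) + Q x' - w‖ + ‖projS Tᗮ (w - (x + v))‖ := norm_projS_sub_le _ _ _ _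
      _ < 3 * b := by linarith

lemma norm_sub_le_of_near_gr (hk : 1 ≤ k) (hQ : ∀ χ, Q χ = ψ fun _ => χ)
    {x : T} {v : Tᗮ} {w : 𝔼} {ε r : ℝ} (hε1 : ε ≤ 1) (hr1 : r ≤ 1) (hz : ‖(x : 𝔼) + v‖ ≤ r)
    (hwT : ‖projS T (w - (x + v))‖ < ε * r) (hwN : ‖projS Tᗮ (w - (x + v))‖ < ε * r ^ k)
    (hwQ : infDist w (gr Q) ≤ ε * r ^ k) :
    ‖v - Q x‖ ≤ 3 * (1 + k * 4 ^ (k - 1) * ‖ψ‖) * ε * r ^ k := by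
  obtain ⟨x', hx', hv⟩ := exists_near_of_infDist_gr_le hwT hwN hwQ
  have hr : 0 ≤ r := (norm_nonneg _).trans hz
  have hε : 0 ≤ ε := by
    by_contra! hε
    nlinarith [norm_nonneg (projS T (w - (x + v)))]
  have hxr : ‖x‖ ≤ r := by
    simpa [projS_coe_add] using (norm_projS_le T _).trans hz
  have hrk : r ^ k ≤ r := pow_le_of_le_one hr hr1 (by omega)
  have hδ : ‖x' - x‖ ≤ 3 * ε * r := by nlinarith
  have hmax : max ‖x'‖ ‖x‖ ≤ 4 * r := by
    refine max_le ?_ (by linarith)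
    nlinarith [norm_le_norm_add_norm_sub' x' x]
  calc ‖v - Q x‖ ≤ ‖v - Q x'‖ + ‖Q x' - Q x‖ := norm_sub_le_norm_sub_add_norm_sub ..
    _ ≤ 3 * ε * r ^ k + ‖ψ‖ * k * (4 * r) ^ (k - 1) * (3 * ε * r) := by
        refine add_le_add (by rw [norm_sub_rev]; linarith) ?_
        rw [hQ, hQ]
        refine (ψ.norm_apply_const_sub_le x' x).trans ?_
        gcongr
    _ = 3 * (1 + k * 4 ^ (k - 1) * ‖ψ‖) * ε * r ^ k := by
        rw [← pow_sub_one_mul (by omega : k ≠ 0) r]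
        ring

lemma isLittleO_sub_along_ray (hk : 1 ≤ k) {P : T → Tᗮ} (hQ : ∀ χ, Q χ = ψ fun _ => χ)
    (hyp : ∀ ε : ℝ, 0 < ε → ∃ ρ : ℝ, 0 < ρ ∧ ∀ r : ℝ, 0 < r → r ≤ ρ →
      ∀ z ∈ gr P ∩ closedBall 0 r, ∃ w : 𝔼,
        ‖projS T (w - z)‖ < ε * r ∧ ‖projS Tᗮ (w - z)‖ < ε * r ^ k ∧
        infDist w (gr Q) ≤ ε * r ^ k)
    {χ : T} (hP : (fun t : ℝ => P (t • χ)) =O[𝓝[>] 0] fun t => t) :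
    (fun t : ℝ => P (t • χ) - Q (t • χ)) =o[𝓝[>] 0] fun t => t ^ k := by
  obtain ⟨K, hK, hPK⟩ := hP.exists_pos
  set L := ‖χ‖ + K
  refine isLittleO_of_forall_eventually_le_mul (3 * (1 + k * 4 ^ (k - 1) * ‖ψ‖) * L ^ k)
    fun ε hε hε1 => ?_
  obtain ⟨ρ, hρ, hρw⟩ := hyp ε hε
  have hsmall : ∀ᶠ t in 𝓝[>] (0 : ℝ), L * t < min ρ 1 := by
    have : Tendsto (fun t => L * t) (𝓝[>] 0) (𝓝 0) :=
      tendsto_nhdsWithin_of_tendsto_nhds (by simpa using (continuous_const_mul L).tendsto 0)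
    exact this.eventually (gt_mem_nhds (lt_min hρ one_pos))
  filter_upwards [hPK.bound, hsmall, self_mem_nhdsWithin] with t hPt htr (ht : 0 < t)
  have hz : ‖((t • χ : T) : 𝔼) + P (t • χ)‖ ≤ L * t := by
    refine (norm_add_le _ _).trans ?_
    rw [Real.norm_of_nonneg ht.le] at hPt
    simp only [Submodule.norm_coe, norm_smul, Real.norm_of_nonneg ht.le]
    linarith
  obtain ⟨w, hwT, hwN, hwQ⟩ := hρw (L * t) (by positivity) (htr.le.trans (min_le_left _ _)) _
    ⟨⟨t • χ, rfl⟩, mem_closedBall_zero_iff.2 hz⟩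
  calc ‖P (t • χ) - Q (t • χ)‖ ≤ 3 * (1 + k * 4 ^ (k - 1) * ‖ψ‖) * ε * (L * t) ^ k :=
        norm_sub_le_of_near_gr hk hQ hε1 (htr.le.trans (min_le_right _ _)) hz hwT hwN hwQ
    _ = ε * (3 * (1 + k * 4 ^ (k - 1) * ‖ψ‖) * L ^ k) * ‖t ^ k‖ := by
        rw [norm_pow, Real.norm_of_nonneg ht.le, mul_pow]
        ring

end Graph

theorem stmt10_general {n k : ℕ} (hk : 1 ≤ k)
    (T : Submodule ℝ (EuclideanSpace ℝ (Fin n)))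
    (P Q : T → Tᗮ) (hP : PolyDegLE k P) (hP0 : P 0 = 0)
    (hQ : ∃ ψ : ContinuousMultilinearMap ℝ (fun _ : Fin k => T) Tᗮ,
      ∀ χ : T, Q χ = ψ (fun _ => χ))
    (hyp : ∀ ε : ℝ, 0 < ε → ∃ ρ : ℝ, 0 < ρ ∧ ∀ r : ℝ, 0 < r → r ≤ ρ →
      ∀ z ∈ (Set.range fun χ : T => (χ : EuclideanSpace ℝ (Fin n)) +
          (P χ : EuclideanSpace ℝ (Fin n))) ∩ Metric.closedBall 0 r,
        ∃ w : EuclideanSpace ℝ (Fin n),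
          ‖projS T (w - z)‖ < ε * r ∧ ‖projS Tᗮ (w - z)‖ < ε * r ^ k ∧
          Metric.infDist w (Set.range fun χ : T => (χ : EuclideanSpace ℝ (Fin n)) +
            (Q χ : EuclideanSpace ℝ (Fin n))) ≤ ε * r ^ k) :
    P = Q := by
  obtain ⟨ψ, hψ⟩ := hQ
  funext χ
  have hPc := hP.isPolyCurve_apply_smul χ
  have hQc : IsPolyCurve k fun t => Q (t • χ) := by
    simpa [hψ, ψ.apply_const_smul] using isPolyCurve_pow_smul le_rfl (ψ fun _ => χ)
  have hPO : (fun t : ℝ => P (t • χ)) =O[𝓝[>] 0] fun t => t := by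
    simpa [hP0] using hPc.isBigO_sub.mono nhdsWithin_le_nhds
  have hzero := (hPc.sub hQc).eq_zero_of_isLittleO (isLittleO_sub_along_ray hk hψ hyp hPO)
  simpa [sub_eq_zero] using congrFun hzero 1

theorem stmt10 {m n k : ℕ} (hm : 1 ≤ m) (hmn : m ≤ n) (hk : 1 ≤ k)
    (T : Submodule ℝ (EuclideanSpace ℝ (Fin n))) (hT : Module.finrank ℝ T = m)
    (P Q : T → Tᗮ) (hP : PolyDegLE k P) (hP0 : P 0 = 0)
    (hQ : ∃ ψ : ContinuousMultilinearMap ℝ (fun _ : Fin k => T) Tᗮ,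
      ∀ χ : T, Q χ = ψ (fun _ => χ))
    (hyp : ∀ ε : ℝ, 0 < ε → ∃ ρ : ℝ, 0 < ρ ∧ ∀ r : ℝ, 0 < r → r ≤ ρ →
      ∀ z ∈ (Set.range fun χ : T => (χ : EuclideanSpace ℝ (Fin n)) +
          (P χ : EuclideanSpace ℝ (Fin n))) ∩ Metric.closedBall 0 r,
        ∃ w : EuclideanSpace ℝ (Fin n),
          ‖projS T (w - z)‖ < ε * r ∧ ‖projS Tᗮ (w - z)‖ < ε * r ^ k ∧
          Metric.infDist w (Set.range fun χ : T => (χ : EuclideanSpace ℝ (Fin n)) +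
            (Q χ : EuclideanSpace ℝ (Fin n))) ≤ ε * r ^ k) :
    P = Q :=
  stmt10_general hk T P Q hP hP0 hQ hyp
end
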